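/- arXiv:1207.1271 — 3 statements merged into one kernel-verified Lean document; each statement's English description precedes it below -/
import Mathlib

section
/- If a, b ∈ ℂ satisfy |a|² + |b|² = 1, then ‖(⟨+| ⊗ I₂ ⊗ I₂) · qs₃‖² = 1/2 and ‖(⟨−| ⊗ I₂ ⊗ I₂) · qs₃‖² = 1/2, where qs₃ = (1/2)(a,a,a,−a,b,b,−b,b)ᵀ. That is, both outcomes of Alice's first measurement M⁰₁ in the Quantum Teleportation Protocol occur with probability λ = 1/2; in particular both transitions are admissible. -/
open Matrix Kronecker

noncomputable section

/-- Kronecker product reindexed to `Fin`-indexed matrices, with the first factor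
most significant (lexicographic ordering of bitstrings). -/
def kron {m n p q : ℕ} (A : Matrix (Fin m) (Fin n) ℂ) (B : Matrix (Fin p) (Fin q) ℂ) :
    Matrix (Fin (m * p)) (Fin (n * q)) ℂ :=
  Matrix.reindex finProdFinEquiv finProdFinEquiv (A ⊗ₖ B)

/-- |+⟩ = (1/√2)(1,1)ᵀ -/
def ketPlus : Matrix (Fin 2) (Fin 1) ℂ := (Real.sqrt 2 : ℂ)⁻¹ • !![1; 1]

/-- |−⟩ = (1/√2)(1,−1)ᵀ -/
def ketMinus : Matrix (Fin 2) (Fin 1) ℂ := (Real.sqrt 2 : ℂ)⁻¹ • !![1; -1]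

/-- ⟨+| : conjugate transpose of |+⟩ -/
def braPlus : Matrix (Fin 1) (Fin 2) ℂ := ketPlusᴴ

/-- ⟨−| : conjugate transpose of |−⟩ -/
def braMinus : Matrix (Fin 1) (Fin 2) ℂ := ketMinusᴴ

/-- ⟨x_s| with |x₀⟩ = |+⟩, |x₁⟩ = |−⟩ -/
def bra : Fin 2 → Matrix (Fin 1) (Fin 2) ℂ := ![braPlus, braMinus]

/-- identity on one qubit -/
def I2 : Matrix (Fin 2) (Fin 2) ℂ := 1

/-- controlled-Z operator CZ = diag(1,1,1,−1) -/
def CZ : Matrix (Fin 4) (Fin 4) ℂ := !![1,0,0,0; 0,1,0,0; 0,0,1,0; 0,0,0,-1]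

/-- Pauli X -/
def X : Matrix (Fin 2) (Fin 2) ℂ := !![0,1; 1,0]

/-- Pauli Z -/
def Z : Matrix (Fin 2) (Fin 2) ℂ := !![1,0; 0,-1]

/-- one-qubit state (a,b)ᵀ -/
def ket (a b : ℂ) : Matrix (Fin 2) (Fin 1) ℂ := !![a; b]

/-- the entangled resource state χ = (1/2)(1,1,1,−1)ᵀ -/
def chi : Matrix (Fin 4) (Fin 1) ℂ := (1/2 : ℂ) • !![1; 1; 1; -1]

/-- qs₃ = (1/2)(a,a,a,−a,b,b,−b,b)ᵀ -/
def qs3 (a b : ℂ) : Matrix (Fin 8) (Fin 1) ℂ := (1/2 : ℂ) • !![a; a; a; -a; b; b; -b; b]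

/-- qs₆ = (1/2)(a+b,a+b,a−b,−a+b)ᵀ -/
def qs6 (a b : ℂ) : Matrix (Fin 4) (Fin 1) ℂ := (1/2 : ℂ) • !![a+b; a+b; a-b; -a+b]

/-- qs₇ = (1/2)(a−b,a−b,a+b,−a−b)ᵀ -/
def qs7 (a b : ℂ) : Matrix (Fin 4) (Fin 1) ℂ := (1/2 : ℂ) • !![a-b; a-b; a+b; -a-b]

/-
Applying ⟨±| to the first qubit of qs₃ leaves (1/√2)·qs₆ resp. (1/√2)·qs₇.
By the parallelogram law ‖a+b‖² + ‖a−b‖² = 2(‖a‖² + ‖b‖²), both qs₆ and qs₇ have squared norm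
‖a‖² + ‖b‖² = 1, so each outcome has probability (1/√2)² = 1/2.
-/

lemma kron_apply {m n p q : ℕ} (A : Matrix (Fin m) (Fin n) ℂ) (B : Matrix (Fin p) (Fin q) ℂ)
    (i : Fin (m * p)) (j : Fin (n * q)) :
    kron A B i j = A i.divNat j.divNat * B i.modNat j.modNat := rfl

lemma sum_norm_sq_smul {ι : Type*} [Fintype ι] (c : ℂ) (v : Matrix ι (Fin 1) ℂ) :
    ∑ i, ‖(c • v) i 0‖ ^ 2 = ‖c‖ ^ 2 * ∑ i, ‖v i 0‖ ^ 2 := by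
  simp only [Matrix.smul_apply, smul_eq_mul, norm_mul, mul_pow, Finset.mul_sum]

lemma norm_inv_sqrt_two_sq : ‖(Real.sqrt 2 : ℂ)⁻¹‖ ^ 2 = 1 / 2 := by
  rw [norm_inv, Complex.norm_real, Real.norm_of_nonneg (Real.sqrt_nonneg 2), inv_pow,
    Real.sq_sqrt zero_le_two, one_div]

lemma kron_braPlus_I2_I2_mul_qs3 (a b : ℂ) :
    (kron (kron braPlus I2) I2 : Matrix (Fin 4) (Fin 8) ℂ) * qs3 a b
      = (Real.sqrt 2 : ℂ)⁻¹ • qs6 a b := by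
  ext i j
  fin_cases i <;> fin_cases j <;>
    simp [Matrix.mul_apply, Fin.sum_univ_eight, kron_apply, braPlus, ketPlus, I2, qs3, qs6,
      Matrix.one_apply, Fin.divNat, Fin.modNat, Fin.ext_iff] <;> ring

lemma kron_braMinus_I2_I2_mul_qs3 (a b : ℂ) :
    (kron (kron braMinus I2) I2 : Matrix (Fin 4) (Fin 8) ℂ) * qs3 a b
      = (Real.sqrt 2 : ℂ)⁻¹ • qs7 a b := by
  ext i j
  fin_cases i <;> fin_cases j <;>
    simp [Matrix.mul_apply, Fin.sum_univ_eight, kron_apply, braMinus, ketMinus, I2, qs3, qs7,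
      Matrix.one_apply, Fin.divNat, Fin.modNat, Fin.ext_iff] <;> ring

lemma sum_norm_sq_qs6 (a b : ℂ) : ∑ i, ‖qs6 a b i 0‖ ^ 2 = ‖a‖ ^ 2 + ‖b‖ ^ 2 := by
  have parallelogram := parallelogram_law_with_norm ℂ a b
  rw [qs6, sum_norm_sq_smul]
  simp only [Matrix.of_apply, Matrix.cons_val', Matrix.cons_val_fin_one, Fin.sum_univ_four,
    Matrix.cons_val_zero, Matrix.cons_val_one, Matrix.cons_val, neg_add_eq_sub, norm_sub_rev b a,
    norm_div, norm_one, Complex.norm_ofNat]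
  linarith

lemma sum_norm_sq_qs7 (a b : ℂ) : ∑ i, ‖qs7 a b i 0‖ ^ 2 = ‖a‖ ^ 2 + ‖b‖ ^ 2 := by
  have parallelogram := parallelogram_law_with_norm ℂ a b
  have norm_neg_sub : ‖-a - b‖ = ‖a + b‖ := by rw [← norm_neg, neg_sub', neg_neg, sub_neg_eq_add]
  rw [qs7, sum_norm_sq_smul]
  simp only [Matrix.of_apply, Matrix.cons_val', Matrix.cons_val_fin_one, Fin.sum_univ_four,
    Matrix.cons_val_zero, Matrix.cons_val_one, Matrix.cons_val, norm_neg_sub,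
    norm_div, norm_one, Complex.norm_ofNat]
  linarith

theorem stmt5 (a b : ℂ) (h : ‖a‖ ^ 2 + ‖b‖ ^ 2 = 1) :
    (∑ i, ‖
        (((kron (kron braPlus I2) I2 : Matrix (Fin 4) (Fin 8) ℂ) * qs3 a b) i 0)‖ ^ 2 = 1 / 2) ∧
    (∑ i, ‖
        (((kron (kron braMinus I2) I2 : Matrix (Fin 4) (Fin 8) ℂ) * qs3 a b) i 0)‖ ^ 2 = 1 / 2) := by
  rw [kron_braPlus_I2_I2_mul_qs3, kron_braMinus_I2_I2_mul_qs3, sum_norm_sq_smul, sum_norm_sq_smul,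
    sum_norm_sq_qs6, sum_norm_sq_qs7, h, norm_inv_sqrt_two_sq, mul_one]
  exact ⟨rfl, rfl⟩
end
end

section
/- Let a, b ∈ ℂ with a ≠ 0 and b ≠ 0, and let qs₃ = (1/2)(a,a,a,−a,b,b,−b,b)ᵀ ∈ ℂ⁸. Then qs₃ is entangled across the bipartition separating qubit 1 from qubits 2,3: there do not exist u ∈ ℂ² and v ∈ ℂ⁴ such that qs₃ = u ⊗ v. That is, after Alice's entanglement command E₁₂, the input qubit 1 is no longer in a pure individual state. -/
/-!
The coordinates x_{ik} of a product vector u ⊗ v satisfy x_{ik} x_{i'k'} = x_{ik'} x_{i'k}: every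
2 × 2 minor across the bipartition vanishes. For qs₃ the coordinates 000, 111 and 011, 100 give
(a/2)(b/2) = (−a/2)(b/2), i.e. ab = 0.
-/

open Matrix Kronecker

noncomputable section

theorem kron_apply_finProdFinEquiv {m n p q : ℕ} (A : Matrix (Fin m) (Fin n) ℂ)
    (B : Matrix (Fin p) (Fin q) ℂ) (i : Fin m) (j : Fin n) (k : Fin p) (l : Fin q) :
    kron A B (finProdFinEquiv (i, k)) (finProdFinEquiv (j, l)) = A i j * B k l := by
  simp [kron]

theorem kron_apply_mul_kron_apply_comm {m n p q : ℕ} (A : Matrix (Fin m) (Fin n) ℂ)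
    (B : Matrix (Fin p) (Fin q) ℂ) (i i' : Fin m) (k k' : Fin p) (j : Fin n) (l : Fin q) :
    kron A B (finProdFinEquiv (i, k)) (finProdFinEquiv (j, l)) *
        kron A B (finProdFinEquiv (i', k')) (finProdFinEquiv (j, l)) =
      kron A B (finProdFinEquiv (i, k')) (finProdFinEquiv (j, l)) *
        kron A B (finProdFinEquiv (i', k)) (finProdFinEquiv (j, l)) := by
  simp only [kron_apply_finProdFinEquiv]
  ring

theorem stmt17 (a b : ℂ) (ha : a ≠ 0) (hb : b ≠ 0) :
    ¬ ∃ (u : Matrix (Fin 2) (Fin 1) ℂ) (v : Matrix (Fin 4) (Fin 1) ℂ),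
        qs3 a b = (kron u v : Matrix (Fin 8) (Fin 1) ℂ) := by
  rintro ⟨u, v, h⟩
  have hkron := kron_apply_mul_kron_apply_comm u v 0 1 0 3 0 0
  rw [← h] at hkron
  have hminor : 2⁻¹ * a * (2⁻¹ * b) = -(2⁻¹ * a * (2⁻¹ * b)) := by
    simpa [qs3, finProdFinEquiv] using hkron
  simpa [ha, hb] using CharZero.eq_neg_self_iff.mp hminor
end
end

section
/- Let a, b ∈ ℂ with a ≠ 0 or b ≠ 0, and let qs₃ = (1/2)(a,a,a,−a,b,b,−b,b)ᵀ ∈ ℂ⁸. Then qs₃ is entangled across the bipartition separating qubits 1,2 from qubit 3: there do not exist u ∈ ℂ⁴ and v ∈ ℂ² such that qs₃ = u ⊗ v. That is, after Alice's entanglement command E₁₂, Bob's qubit 3 is not in a pure individual state. -/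
open Matrix Kronecker

noncomputable section

theorem stmt18 (a b : ℂ) (hab : a ≠ 0 ∨ b ≠ 0) :
    ¬ ∃ (u : Matrix (Fin 4) (Fin 1) ℂ) (v : Matrix (Fin 2) (Fin 1) ℂ),
        qs3 a b = (kron u v : Matrix (Fin 8) (Fin 1) ℂ) := by
  rintro ⟨u, v, h⟩
  have e : ∀ (k : Fin 8) (i : Fin 4) (j : Fin 2), kron u v k 0 = u i 0 * v j 0 →
      qs3 a b k 0 = u i 0 * v j 0 := fun k i j hk => h ▸ hk
  have h0 : (1/2 : ℂ) * a = u 0 0 * v 0 0 := by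
    have := e 0 0 0 rfl
    rwa [show qs3 a b 0 0 = (1/2 : ℂ) * a from rfl] at this
  have h1 : (1/2 : ℂ) * a = u 0 0 * v 1 0 := by
    have := e 1 0 1 rfl
    rwa [show qs3 a b 1 0 = (1/2 : ℂ) * a from rfl] at this
  have h2 : (1/2 : ℂ) * a = u 1 0 * v 0 0 := by
    have := e 2 1 0 rfl
    rwa [show qs3 a b 2 0 = (1/2 : ℂ) * a from rfl] at this
  have h3 : (1/2 : ℂ) * -a = u 1 0 * v 1 0 := by
    have := e 3 1 1 rfl
    rwa [show qs3 a b 3 0 = (1/2 : ℂ) * -a from rfl] at this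
  have h4 : (1/2 : ℂ) * b = u 2 0 * v 0 0 := by
    have := e 4 2 0 rfl
    rwa [show qs3 a b 4 0 = (1/2 : ℂ) * b from rfl] at this
  have h5 : (1/2 : ℂ) * b = u 2 0 * v 1 0 := by
    have := e 5 2 1 rfl
    rwa [show qs3 a b 5 0 = (1/2 : ℂ) * b from rfl] at this
  have h6 : (1/2 : ℂ) * -b = u 3 0 * v 0 0 := by
    have := e 6 3 0 rfl
    rwa [show qs3 a b 6 0 = (1/2 : ℂ) * -b from rfl] at this
  have h7 : (1/2 : ℂ) * b = u 3 0 * v 1 0 := by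
    have := e 7 3 1 rfl
    rwa [show qs3 a b 7 0 = (1/2 : ℂ) * b from rfl] at this
  have keya : u 0 0 * v 0 0 * (u 1 0 * v 1 0) = u 0 0 * v 1 0 * (u 1 0 * v 0 0) := by ring
  rw [← h0, ← h3, ← h1, ← h2] at keya
  have ha : a = 0 := mul_self_eq_zero.mp (by linear_combination -2 * keya)
  have keyb : u 2 0 * v 0 0 * (u 3 0 * v 1 0) = u 2 0 * v 1 0 * (u 3 0 * v 0 0) := by ring
  rw [← h4, ← h7, ← h5, ← h6] at keyb
  have hb : b = 0 := mul_self_eq_zero.mp (by linear_combination 2 * keyb)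
  rcases hab with h' | h' <;> exact h' (by assumption)
end
end
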